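/- arXiv:2203.09113 — 9 statements merged into one kernel-verified Lean document; each statement's English description precedes it below -/
import Mathlib

section
/- Along any solution of the zeroth-order fast (layer) system without permanent charge, φ₀' = u₀, u₀' = −z₁c₁₀ − z₂c₂₀, c₁₀' = −z₁c₁₀u₀, c₂₀' = −z₂c₂₀u₀ (where z₁, z₂ are real constants and φ₀, u₀, c₁₀, c₂₀ : ℝ → ℝ are differentiable), the three quantities e^{z₁φ₀}·c₁₀, e^{z₂φ₀}·c₂₀, and c₁₀ + c₂₀ − u₀²/2 are constant in the independent variable ξ. -/
/-!
Each quantity has derivative zero along solutions. For the Boltzmann factors,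
`(exp (z φ) c)' = exp (z φ) (z u c - z c u) = 0`. For the third, the total concentration
satisfies `(c₁ + c₂)' = -(z₁ c₁ + z₂ c₂) u = u' u = (u² / 2)'`.
-/

open Real

lemma eq_of_forall_hasDerivAt_zero {f : ℝ → ℝ} (hf : ∀ x, HasDerivAt f 0 x) (x y : ℝ) :
    f x = f y :=
  is_const_of_deriv_eq_zero (fun x => (hf x).differentiableAt) (fun x => (hf x).deriv) x y

lemma exp_mul_mul_eq_of_hasDerivAt {z : ℝ} {φ u c : ℝ → ℝ}
    (hφ : ∀ ξ, HasDerivAt φ (u ξ) ξ) (hc : ∀ ξ, HasDerivAt c (-z * c ξ * u ξ) ξ) (ξ η : ℝ) :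
    exp (z * φ ξ) * c ξ = exp (z * φ η) * c η := by
  refine eq_of_forall_hasDerivAt_zero (f := fun ξ => exp (z * φ ξ) * c ξ) (fun x => ?_) ξ η
  exact ((((hφ x).const_mul z).exp).mul (hc x)).congr_deriv (by ring)

lemma sub_sq_div_two_eq_of_hasDerivAt {C u v : ℝ → ℝ}
    (hC : ∀ ξ, HasDerivAt C (u ξ * v ξ) ξ) (hu : ∀ ξ, HasDerivAt u (v ξ) ξ) (ξ η : ℝ) :
    C ξ - u ξ ^ 2 / 2 = C η - u η ^ 2 / 2 := by
  refine eq_of_forall_hasDerivAt_zero (f := fun ξ => C ξ - u ξ ^ 2 / 2) (fun x => ?_) ξ η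
  exact ((hC x).sub (((hu x).pow 2).div_const 2)).congr_deriv (by ring)

/-- Lemma 2.1 (zeroth order): first integrals of the zeroth-order layer system
without permanent charge. -/
theorem first_integrals_zeroth_order_no_charge
    (z₁ z₂ : ℝ) (φ₀ u₀ c₁₀ c₂₀ : ℝ → ℝ)
    (hφ : ∀ ξ, HasDerivAt φ₀ (u₀ ξ) ξ)
    (hu : ∀ ξ, HasDerivAt u₀ (-z₁ * c₁₀ ξ - z₂ * c₂₀ ξ) ξ)
    (hc₁ : ∀ ξ, HasDerivAt c₁₀ (-z₁ * c₁₀ ξ * u₀ ξ) ξ)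
    (hc₂ : ∀ ξ, HasDerivAt c₂₀ (-z₂ * c₂₀ ξ * u₀ ξ) ξ) :
    (∀ ξ, Real.exp (z₁ * φ₀ ξ) * c₁₀ ξ = Real.exp (z₁ * φ₀ 0) * c₁₀ 0) ∧
    (∀ ξ, Real.exp (z₂ * φ₀ ξ) * c₂₀ ξ = Real.exp (z₂ * φ₀ 0) * c₂₀ 0) ∧
    (∀ ξ, c₁₀ ξ + c₂₀ ξ - u₀ ξ ^ 2 / 2 = c₁₀ 0 + c₂₀ 0 - u₀ 0 ^ 2 / 2) := by
  have hsum : ∀ ξ, HasDerivAt (fun ξ => c₁₀ ξ + c₂₀ ξ)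
      (u₀ ξ * (-z₁ * c₁₀ ξ - z₂ * c₂₀ ξ)) ξ := fun ξ =>
    ((hc₁ ξ).add (hc₂ ξ)).congr_deriv (by ring)
  exact ⟨fun ξ => exp_mul_mul_eq_of_hasDerivAt hφ hc₁ ξ 0,
    fun ξ => exp_mul_mul_eq_of_hasDerivAt hφ hc₂ ξ 0,
    fun ξ => sub_sq_div_two_eq_of_hasDerivAt hsum hu ξ 0⟩
end

section
/- Let z₁, z₂, Q ∈ ℝ and let φ₀, u₀, c₁₀, c₂₀ : ℝ → ℝ be differentiable solving the layer system with permanent charge Q: φ₀' = u₀, u₀' = −z₁c₁₀ − z₂c₂₀ − Q, c₁₀' = −z₁c₁₀u₀, c₂₀' = −z₂c₂₀u₀. Then the three quantities e^{z₁φ₀}·c₁₀, e^{z₂φ₀}·c₂₀, and c₁₀ + c₂₀ − u₀²/2 − Qφ₀ are constant in ξ. -/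
theorem eq_of_forall_hasDerivAt_zero_s2 {𝕜 G : Type*} [RCLike 𝕜] [NormedAddCommGroup G]
    [NormedSpace 𝕜 G] {f : 𝕜 → G} (h : ∀ x, HasDerivAt f 0 x) (x y : 𝕜) : f x = f y :=
  is_const_of_deriv_eq_zero (fun x => (h x).differentiableAt) (fun x => (h x).deriv) x y

theorem hasDerivAt_exp_mul_mul_eq_zero {z : ℝ} {φ u c : ℝ → ℝ} {ξ : ℝ}
    (hφ : HasDerivAt φ (u ξ) ξ) (hc : HasDerivAt c (-z * c ξ * u ξ) ξ) :
    HasDerivAt (fun ξ => Real.exp (z * φ ξ) * c ξ) 0 ξ :=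
  ((hφ.const_mul z).exp.mul hc).congr_deriv (by ring)

theorem hasDerivAt_layer_energy_eq_zero {z₁ z₂ Q : ℝ} {φ u c₁ c₂ : ℝ → ℝ} {ξ : ℝ}
    (hφ : HasDerivAt φ (u ξ) ξ) (hu : HasDerivAt u (-z₁ * c₁ ξ - z₂ * c₂ ξ - Q) ξ)
    (hc₁ : HasDerivAt c₁ (-z₁ * c₁ ξ * u ξ) ξ) (hc₂ : HasDerivAt c₂ (-z₂ * c₂ ξ * u ξ) ξ) :
    HasDerivAt (fun ξ => c₁ ξ + c₂ ξ - u ξ ^ 2 / 2 - Q * φ ξ) 0 ξ := by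
  refine (((hc₁.add hc₂).sub ((hu.pow 2).div_const 2)).sub (hφ.const_mul Q)).congr_deriv ?_
  push_cast
  ring

/-- Lemma 3.2 (zeroth order): first integrals of the zeroth-order layer system
with constant permanent charge `Q`. -/
theorem first_integrals_zeroth_order_with_charge
    (z₁ z₂ Q : ℝ) (φ₀ u₀ c₁₀ c₂₀ : ℝ → ℝ)
    (hφ : ∀ ξ, HasDerivAt φ₀ (u₀ ξ) ξ)
    (hu : ∀ ξ, HasDerivAt u₀ (-z₁ * c₁₀ ξ - z₂ * c₂₀ ξ - Q) ξ)
    (hc₁ : ∀ ξ, HasDerivAt c₁₀ (-z₁ * c₁₀ ξ * u₀ ξ) ξ)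
    (hc₂ : ∀ ξ, HasDerivAt c₂₀ (-z₂ * c₂₀ ξ * u₀ ξ) ξ) :
    (∀ ξ, Real.exp (z₁ * φ₀ ξ) * c₁₀ ξ = Real.exp (z₁ * φ₀ 0) * c₁₀ 0) ∧
    (∀ ξ, Real.exp (z₂ * φ₀ ξ) * c₂₀ ξ = Real.exp (z₂ * φ₀ 0) * c₂₀ 0) ∧
    (∀ ξ, c₁₀ ξ + c₂₀ ξ - u₀ ξ ^ 2 / 2 - Q * φ₀ ξ =
          c₁₀ 0 + c₂₀ 0 - u₀ 0 ^ 2 / 2 - Q * φ₀ 0) := by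
  have hboltzmann₁ ξ := hasDerivAt_exp_mul_mul_eq_zero (hφ ξ) (hc₁ ξ)
  have hboltzmann₂ ξ := hasDerivAt_exp_mul_mul_eq_zero (hφ ξ) (hc₂ ξ)
  have henergy ξ := hasDerivAt_layer_energy_eq_zero (hφ ξ) (hu ξ) (hc₁ ξ) (hc₂ ξ)
  exact ⟨(eq_of_forall_hasDerivAt_zero_s2 hboltzmann₁ · 0),
    (eq_of_forall_hasDerivAt_zero_s2 hboltzmann₂ · 0), (eq_of_forall_hasDerivAt_zero_s2 henergy · 0)⟩
end

section
/- Let z₁, z₂, λ, Q ∈ ℝ and let φ₀, u₀, c₁₀, c₂₀, φ₁, u₁, c₁₁, c₂₁ : ℝ → ℝ be differentiable with c₁₀(ξ) ≠ 0 and c₂₀(ξ) ≠ 0 for all ξ. Suppose (φ₀,u₀,c₁₀,c₂₀) solves φ₀' = u₀, u₀' = −z₁c₁₀ − z₂c₂₀ − Q, c₁₀' = −z₁c₁₀u₀, c₂₀' = −z₂c₂₀u₀, and (φ₁,u₁,c₁₁,c₂₁) solves φ₁' = u₁, u₁' = −z₁c₁₁ − z₂c₂₁, c₁₁' = −z₁c₁₁u₀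 − z₁c₁₀u₁ + u₀((λ+1)z₂c₁₀c₂₀ + 2z₁c₁₀²), c₂₁' = −z₂c₂₁u₀ − z₂c₂₀u₁ + u₀((λ+1)z₁c₁₀c₂₀ + 2λz₂c₂₀²). Then the three quantities z₁φ₁ + c₁₁/c₁₀ + 2c₁₀ + (λ+1)c₂₀, z₂φ₁ + c₂₁/c₂₀ + 2λc₂₀ + (λ+1)c₁₀, and u₀u₁ − c₁₁ − c₂₁ − (λ+1)c₁₀c₂₀ − c₁₀² − λc₂₀² + Qφ₁ are constant in ξ. -/
/-! The equations make the derivative of each quantity vanish identically. For the species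
integrals, the quotient rule turns the linear part `-z c₁ u₀ - z c₀ u₁` of `c₁'` into
`(c₁ / c₀)' = -z u₁ + u₀ (b z' d₀ + a z c₀)`, which is cancelled by `z φ₁' = z u₁` and by the
derivatives of `a c₀` and `b d₀`. -/

theorem eq_of_hasDerivAt_zero {𝕜 G : Type*} [RCLike 𝕜] [NormedAddCommGroup G]
    [NormedSpace 𝕜 G] {f : 𝕜 → G} (hf : ∀ x, HasDerivAt f 0 x) (x y : 𝕜) : f x = f y :=
  is_const_of_deriv_eq_zero (fun x => (hf x).differentiableAt) (fun x => (hf x).deriv) x y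

theorem hasDerivAt_species_first_integral {z z' a b x : ℝ} {φ₁ u₀ u₁ c₀ d₀ c₁ : ℝ → ℝ}
    (hc₀ne : c₀ x ≠ 0) (hφ₁ : HasDerivAt φ₁ (u₁ x) x)
    (hc₀ : HasDerivAt c₀ (-z * c₀ x * u₀ x) x) (hd₀ : HasDerivAt d₀ (-z' * d₀ x * u₀ x) x)
    (hc₁ : HasDerivAt c₁ (-z * c₁ x * u₀ x - z * c₀ x * u₁ x +
      u₀ x * (b * z' * c₀ x * d₀ x + a * z * c₀ x ^ 2)) x) :
    HasDerivAt (fun y => z * φ₁ y + c₁ y / c₀ y + a * c₀ y + b * d₀ y) 0 x := by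
  refine ((((hφ₁.const_mul z).add (hc₁.div hc₀ hc₀ne)).add (hc₀.const_mul a)).add
    (hd₀.const_mul b)).congr_deriv ?_
  field_simp
  ring

theorem hasDerivAt_energy_first_integral {z₁ z₂ lam Q x : ℝ}
    {u₀ c₁₀ c₂₀ φ₁ u₁ c₁₁ c₂₁ : ℝ → ℝ}
    (hu₀ : HasDerivAt u₀ (-z₁ * c₁₀ x - z₂ * c₂₀ x - Q) x)
    (hc₁₀ : HasDerivAt c₁₀ (-z₁ * c₁₀ x * u₀ x) x)
    (hc₂₀ : HasDerivAt c₂₀ (-z₂ * c₂₀ x * u₀ x) x)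
    (hφ₁ : HasDerivAt φ₁ (u₁ x) x)
    (hu₁ : HasDerivAt u₁ (-z₁ * c₁₁ x - z₂ * c₂₁ x) x)
    (hc₁₁ : HasDerivAt c₁₁
      (-z₁ * c₁₁ x * u₀ x - z₁ * c₁₀ x * u₁ x +
        u₀ x * ((lam + 1) * z₂ * c₁₀ x * c₂₀ x + 2 * z₁ * c₁₀ x ^ 2)) x)
    (hc₂₁ : HasDerivAt c₂₁
      (-z₂ * c₂₁ x * u₀ x - z₂ * c₂₀ x * u₁ x +
        u₀ x * ((lam + 1) * z₁ * c₁₀ x * c₂₀ x + 2 * lam * z₂ * c₂₀ x ^ 2)) x) :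
    HasDerivAt (fun y => u₀ y * u₁ y - c₁₁ y - c₂₁ y - (lam + 1) * c₁₀ y * c₂₀ y
      - c₁₀ y ^ 2 - lam * c₂₀ y ^ 2 + Q * φ₁ y) 0 x := by
  refine ((((((hu₀.mul hu₁).sub hc₁₁).sub hc₂₁).sub ((hc₁₀.const_mul (lam + 1)).mul hc₂₀)).sub
    (hc₁₀.pow 2)).sub ((hc₂₀.pow 2).const_mul lam)).add (hφ₁.const_mul Q) |>.congr_deriv ?_
  ring

theorem first_integrals_first_order_with_charge_general
    (z₁ z₂ lam Q : ℝ) (u₀ c₁₀ c₂₀ φ₁ u₁ c₁₁ c₂₁ : ℝ → ℝ)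
    (hc₁₀ne : ∀ ξ, c₁₀ ξ ≠ 0) (hc₂₀ne : ∀ ξ, c₂₀ ξ ≠ 0)
    (hu₀ : ∀ ξ, HasDerivAt u₀ (-z₁ * c₁₀ ξ - z₂ * c₂₀ ξ - Q) ξ)
    (hc₁₀ : ∀ ξ, HasDerivAt c₁₀ (-z₁ * c₁₀ ξ * u₀ ξ) ξ)
    (hc₂₀ : ∀ ξ, HasDerivAt c₂₀ (-z₂ * c₂₀ ξ * u₀ ξ) ξ)
    (hφ₁ : ∀ ξ, HasDerivAt φ₁ (u₁ ξ) ξ)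
    (hu₁ : ∀ ξ, HasDerivAt u₁ (-z₁ * c₁₁ ξ - z₂ * c₂₁ ξ) ξ)
    (hc₁₁ : ∀ ξ, HasDerivAt c₁₁
      (-z₁ * c₁₁ ξ * u₀ ξ - z₁ * c₁₀ ξ * u₁ ξ +
        u₀ ξ * ((lam + 1) * z₂ * c₁₀ ξ * c₂₀ ξ + 2 * z₁ * c₁₀ ξ ^ 2)) ξ)
    (hc₂₁ : ∀ ξ, HasDerivAt c₂₁
      (-z₂ * c₂₁ ξ * u₀ ξ - z₂ * c₂₀ ξ * u₁ ξ +
        u₀ ξ * ((lam + 1) * z₁ * c₁₀ ξ * c₂₀ ξ + 2 * lam * z₂ * c₂₀ ξ ^ 2)) ξ) :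
    (∀ ξ, z₁ * φ₁ ξ + c₁₁ ξ / c₁₀ ξ + 2 * c₁₀ ξ + (lam + 1) * c₂₀ ξ =
          z₁ * φ₁ 0 + c₁₁ 0 / c₁₀ 0 + 2 * c₁₀ 0 + (lam + 1) * c₂₀ 0) ∧
    (∀ ξ, z₂ * φ₁ ξ + c₂₁ ξ / c₂₀ ξ + 2 * lam * c₂₀ ξ + (lam + 1) * c₁₀ ξ =
          z₂ * φ₁ 0 + c₂₁ 0 / c₂₀ 0 + 2 * lam * c₂₀ 0 + (lam + 1) * c₁₀ 0) ∧
    (∀ ξ, u₀ ξ * u₁ ξ - c₁₁ ξ - c₂₁ ξ - (lam + 1) * c₁₀ ξ * c₂₀ ξ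
            - c₁₀ ξ ^ 2 - lam * c₂₀ ξ ^ 2 + Q * φ₁ ξ =
          u₀ 0 * u₁ 0 - c₁₁ 0 - c₂₁ 0 - (lam + 1) * c₁₀ 0 * c₂₀ 0
            - c₁₀ 0 ^ 2 - lam * c₂₀ 0 ^ 2 + Q * φ₁ 0) :=
  ⟨fun ξ => eq_of_hasDerivAt_zero (fun x => hasDerivAt_species_first_integral
     (hc₁₀ne x) (hφ₁ x) (hc₁₀ x) (hc₂₀ x) (hc₁₁ x)) ξ 0,
   fun ξ => eq_of_hasDerivAt_zero (fun x => hasDerivAt_species_first_integral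
     (hc₂₀ne x) (hφ₁ x) (hc₂₀ x) (hc₁₀ x) ((hc₂₁ x).congr_deriv (by ring))) ξ 0,
   fun ξ => eq_of_hasDerivAt_zero (fun x => hasDerivAt_energy_first_integral
     (hu₀ x) (hc₁₀ x) (hc₂₀ x) (hφ₁ x) (hu₁ x) (hc₁₁ x) (hc₂₁ x)) ξ 0⟩

/-- Lemma 3.2 (first order): first integrals of the first-order layer system
with constant permanent charge `Q`. -/
theorem first_integrals_first_order_with_charge
    (z₁ z₂ lam Q : ℝ) (φ₀ u₀ c₁₀ c₂₀ φ₁ u₁ c₁₁ c₂₁ : ℝ → ℝ)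
    (hc₁₀ne : ∀ ξ, c₁₀ ξ ≠ 0) (hc₂₀ne : ∀ ξ, c₂₀ ξ ≠ 0)
    (hφ₀ : ∀ ξ, HasDerivAt φ₀ (u₀ ξ) ξ)
    (hu₀ : ∀ ξ, HasDerivAt u₀ (-z₁ * c₁₀ ξ - z₂ * c₂₀ ξ - Q) ξ)
    (hc₁₀ : ∀ ξ, HasDerivAt c₁₀ (-z₁ * c₁₀ ξ * u₀ ξ) ξ)
    (hc₂₀ : ∀ ξ, HasDerivAt c₂₀ (-z₂ * c₂₀ ξ * u₀ ξ) ξ)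
    (hφ₁ : ∀ ξ, HasDerivAt φ₁ (u₁ ξ) ξ)
    (hu₁ : ∀ ξ, HasDerivAt u₁ (-z₁ * c₁₁ ξ - z₂ * c₂₁ ξ) ξ)
    (hc₁₁ : ∀ ξ, HasDerivAt c₁₁
      (-z₁ * c₁₁ ξ * u₀ ξ - z₁ * c₁₀ ξ * u₁ ξ +
        u₀ ξ * ((lam + 1) * z₂ * c₁₀ ξ * c₂₀ ξ + 2 * z₁ * c₁₀ ξ ^ 2)) ξ)
    (hc₂₁ : ∀ ξ, HasDerivAt c₂₁
      (-z₂ * c₂₁ ξ * u₀ ξ - z₂ * c₂₀ ξ * u₁ ξ +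
        u₀ ξ * ((lam + 1) * z₁ * c₁₀ ξ * c₂₀ ξ + 2 * lam * z₂ * c₂₀ ξ ^ 2)) ξ) :
    (∀ ξ, z₁ * φ₁ ξ + c₁₁ ξ / c₁₀ ξ + 2 * c₁₀ ξ + (lam + 1) * c₂₀ ξ =
          z₁ * φ₁ 0 + c₁₁ 0 / c₁₀ 0 + 2 * c₁₀ 0 + (lam + 1) * c₂₀ 0) ∧
    (∀ ξ, z₂ * φ₁ ξ + c₂₁ ξ / c₂₀ ξ + 2 * lam * c₂₀ ξ + (lam + 1) * c₁₀ ξ =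
          z₂ * φ₁ 0 + c₂₁ 0 / c₂₀ 0 + 2 * lam * c₂₀ 0 + (lam + 1) * c₁₀ 0) ∧
    (∀ ξ, u₀ ξ * u₁ ξ - c₁₁ ξ - c₂₁ ξ - (lam + 1) * c₁₀ ξ * c₂₀ ξ
            - c₁₀ ξ ^ 2 - lam * c₂₀ ξ ^ 2 + Q * φ₁ ξ =
          u₀ 0 * u₁ 0 - c₁₁ 0 - c₂₁ 0 - (lam + 1) * c₁₀ 0 * c₂₀ 0
            - c₁₀ 0 ^ 2 - lam * c₂₀ 0 ^ 2 + Q * φ₁ 0) :=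
  first_integrals_first_order_with_charge_general z₁ z₂ lam Q u₀ c₁₀ c₂₀ φ₁ u₁ c₁₁ c₂₁ hc₁₀ne hc₂₀ne
    hu₀ hc₁₀ hc₂₀ hφ₁ hu₁ hc₁₁ hc₂₁
end

section
/- Let z₁ > 0 > z₂ be real numbers, let V ∈ ℝ and l₁, l₂ > 0, and define A := (z₁l₁)^{−z₂/(z₁−z₂)}·(−z₂l₂)^{z₁/(z₁−z₂)} (real powers of positive reals), φ₀ˡ := V − (1/(z₁−z₂))·ln(−z₂l₂/(z₁l₁)), c₁₀ˡ := A/z₁, and c₂₀ˡ := −A/z₂. Then: (i) z₁c₁₀ˡ + z₂c₂₀ˡ = 0 and c₁₀ˡ > 0, c₂₀ˡ > 0; (ii) e^{z₁φ₀ˡ}·c₁₀ˡ = e^{z₁V}·l₁ and e^{z₂φ₀ˡ}·c₂₀ˡ = e^{z₂V}·l₂; (iii) l₁ + l₂ − c₁₀ˡ − c₂₀ˡ = l₁ + l₂ + ((z₁−z₂)/(z₁z₂))·A ≥ 0, so the boundary-layer jump quantity (u₀ˡ)² := 2(l₁ + l₂ − c₁₀ˡ − c₂₀ˡ) is well defined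 as a square. -/
/-- Proposition 2.2(i), zeroth order: the boundary-layer landing point on the
slow manifold determined from the boundary data `(V, l₁, l₂)`. -/
theorem boundary_layer_landing_point_zeroth_order
    (z₁ z₂ V l₁ l₂ : ℝ) (hz₁ : 0 < z₁) (hz₂ : z₂ < 0)
    (hl₁ : 0 < l₁) (hl₂ : 0 < l₂)
    (A φ₀l c₁₀l c₂₀l : ℝ)
    (hA : A = (z₁ * l₁) ^ (-z₂ / (z₁ - z₂)) * (-z₂ * l₂) ^ (z₁ / (z₁ - z₂)))
    (hφ₀l : φ₀l = V - (1 / (z₁ - z₂)) * Real.log (-z₂ * l₂ / (z₁ * l₁)))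
    (hc₁₀l : c₁₀l = A / z₁) (hc₂₀l : c₂₀l = -A / z₂) :
    (z₁ * c₁₀l + z₂ * c₂₀l = 0 ∧ 0 < c₁₀l ∧ 0 < c₂₀l) ∧
    (Real.exp (z₁ * φ₀l) * c₁₀l = Real.exp (z₁ * V) * l₁ ∧
      Real.exp (z₂ * φ₀l) * c₂₀l = Real.exp (z₂ * V) * l₂) ∧
    (l₁ + l₂ - c₁₀l - c₂₀l = l₁ + l₂ + ((z₁ - z₂) / (z₁ * z₂)) * A ∧
      0 ≤ l₁ + l₂ - c₁₀l - c₂₀l) := by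
  have hz : 0 < z₁ - z₂ := by linarith
  have hz₂' : (0:ℝ) < -z₂ := by linarith
  have hz₁0 : z₁ ≠ 0 := hz₁.ne'
  have hz₂0 : z₂ ≠ 0 := hz₂.ne
  have hz0 : z₁ - z₂ ≠ 0 := hz.ne'
  have ha : 0 < z₁ * l₁ := by positivity
  have hb : 0 < -z₂ * l₂ := by positivity
  have hA0 : 0 < A := by rw [hA]; positivity
  have hra : ∀ y : ℝ, (z₁ * l₁) ^ y = Real.exp (y * Real.log (z₁ * l₁)) := fun y => by
    rw [Real.rpow_def_of_pos ha, mul_comm]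
  have hrb : ∀ y : ℝ, (-z₂ * l₂) ^ y = Real.exp (y * Real.log (-z₂ * l₂)) := fun y => by
    rw [Real.rpow_def_of_pos hb, mul_comm]
  have hAexp : A = Real.exp ((-z₂ / (z₁ - z₂)) * Real.log (z₁ * l₁)
      + (z₁ / (z₁ - z₂)) * Real.log (-z₂ * l₂)) := by
    rw [hA, hra, hrb, ← Real.exp_add]
  have hlog : Real.log (-z₂ * l₂ / (z₁ * l₁))
      = Real.log (-z₂ * l₂) - Real.log (z₁ * l₁) := Real.log_div hb.ne' ha.ne'
  -- the AM-GM bound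
  have hw : -z₂ / (z₁ - z₂) + z₁ / (z₁ - z₂) = 1 := by field_simp; ring
  have hAM : A ≤ (-z₂ / (z₁ - z₂)) * (z₁ * l₁) + (z₁ / (z₁ - z₂)) * (-z₂ * l₂) := by
    rw [hA]
    exact Real.geom_mean_le_arith_mean2_weighted (div_nonneg hz₂'.le hz.le)
      (div_nonneg hz₁.le hz.le) ha.le hb.le hw
  have key : A * (z₁ - z₂) ≤ z₁ * (-z₂) * (l₁ + l₂) := by
    have h := mul_le_mul_of_nonneg_right hAM hz.le
    calc A * (z₁ - z₂) ≤ ((-z₂ / (z₁ - z₂)) * (z₁ * l₁)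
          + (z₁ / (z₁ - z₂)) * (-z₂ * l₂)) * (z₁ - z₂) := h
      _ = z₁ * (-z₂) * (l₁ + l₂) := by field_simp; ring
  refine ⟨⟨?_, ?_, ?_⟩, ⟨?_, ?_⟩, ?_, ?_⟩
  · rw [hc₁₀l, hc₂₀l]; field_simp; ring
  · rw [hc₁₀l]; positivity
  · rw [hc₂₀l, neg_div]
    exact neg_pos.2 (div_neg_of_pos_of_neg hA0 hz₂)
  · have hR : Real.exp (z₁ * V) * l₁ = Real.exp (z₁ * V + Real.log (z₁ * l₁)) / z₁ := by
      rw [Real.exp_add, Real.exp_log ha]; field_simp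
    rw [hR, hc₁₀l, hAexp, hφ₀l, hlog, mul_div_assoc', ← Real.exp_add]
    rw [div_eq_div_iff hz₁0 hz₁0] at *
    congr 2
    field_simp
    ring
  · have hR : Real.exp (z₂ * V) * l₂ = Real.exp (z₂ * V + Real.log (-z₂ * l₂)) / (-z₂) := by
      rw [Real.exp_add, Real.exp_log hb]; field_simp
    have hL : -A / z₂ = A / (-z₂) := by rw [neg_div, div_neg]
    rw [hR, hc₂₀l, hL, hAexp, hφ₀l, hlog, mul_div_assoc', ← Real.exp_add]
    congr 2
    field_simp
    ring
  · rw [hc₁₀l, hc₂₀l]; field_simp; ring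
  · rw [hc₁₀l, hc₂₀l]
    have h1 : l₁ + l₂ - A / z₁ - -A / z₂
        = (z₁ * (-z₂) * (l₁ + l₂) - A * (z₁ - z₂)) / (z₁ * (-z₂)) := by
      field_simp; ring
    rw [h1]
    exact div_nonneg (by linarith) (by positivity)
end

section
/- Let z₁ > 0 > z₂, λ ∈ ℝ, and l₁, l₂ > 0. Set A := (z₁l₁)^{−z₂/(z₁−z₂)}·(−z₂l₂)^{z₁/(z₁−z₂)}, c₁₀ˡ := A/z₁, c₂₀ˡ := −A/z₂, w(a,b) := a + λb + ((λz₁ − z₂)/(z₁ − z₂))(a + b), φ₁ˡ := ((1−λ)/(z₁−z₂))·(l₁ + l₂ − c₁₀ˡ − c₂₀ˡ), c₁₁ˡ := c₁₀ˡ·(w(l₁,l₂) + (2(λz₁−z₂)/z₂)·c₁₀ˡ), and c₂₁ˡ := −(z₁/z₂)·c₁₁ˡ. Then z₁c₁₁ˡ + z₂c₂₁ˡ = 0, and the two matching equations coming from the first-order first integrals hold: c₁₁ˡ = c₁₀ˡ·(2l₁ + (λ+1)l₂ − 2c₁₀ˡ − (λ+1)c₂₀ˡ − z₁φ₁ˡ)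 and c₂₁ˡ = c₂₀ˡ·(2λl₂ + (λ+1)l₁ − 2λc₂₀ˡ − (λ+1)c₁₀ˡ − z₂φ₁ˡ). -/
/-- Proposition 2.2(i), first order: the first-order corrections
`(φ₁ˡ, c₁₁ˡ, c₂₁ˡ)` of the boundary-layer landing point satisfy the matching
equations coming from the first-order first integrals. -/
theorem boundary_layer_landing_point_first_order
    (z₁ z₂ lam l₁ l₂ : ℝ) (hz₁ : 0 < z₁) (hz₂ : z₂ < 0)
    (hl₁ : 0 < l₁) (hl₂ : 0 < l₂)
    (A c₁₀l c₂₀l φ₁l c₁₁l c₂₁l : ℝ) (w : ℝ → ℝ → ℝ)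
    (hA : A = (z₁ * l₁) ^ (-z₂ / (z₁ - z₂)) * (-z₂ * l₂) ^ (z₁ / (z₁ - z₂)))
    (hc₁₀l : c₁₀l = A / z₁) (hc₂₀l : c₂₀l = -A / z₂)
    (hw : ∀ a b, w a b = a + lam * b + ((lam * z₁ - z₂) / (z₁ - z₂)) * (a + b))
    (hφ₁l : φ₁l = ((1 - lam) / (z₁ - z₂)) * (l₁ + l₂ - c₁₀l - c₂₀l))
    (hc₁₁l : c₁₁l = c₁₀l * (w l₁ l₂ + (2 * (lam * z₁ - z₂) / z₂) * c₁₀l))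
    (hc₂₁l : c₂₁l = -(z₁ / z₂) * c₁₁l) :
    z₁ * c₁₁l + z₂ * c₂₁l = 0 ∧
    c₁₁l = c₁₀l * (2 * l₁ + (lam + 1) * l₂ - 2 * c₁₀l - (lam + 1) * c₂₀l - z₁ * φ₁l) ∧
    c₂₁l = c₂₀l * (2 * lam * l₂ + (lam + 1) * l₁ - 2 * lam * c₂₀l - (lam + 1) * c₁₀l - z₂ * φ₁l) := by
  have hz1 : z₁ ≠ 0 := ne_of_gt hz₁
  have hz2 : z₂ ≠ 0 := ne_of_lt hz₂
  have hd : z₁ - z₂ ≠ 0 := by nlinarith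
  have hA' : A = z₁ * c₁₀l := by rw [hc₁₀l]; field_simp
  have hc₂₀ : c₂₀l = -(z₁ * c₁₀l) / z₂ := by rw [hc₂₀l, hA']
  subst hc₂₁l hc₁₁l hφ₁l
  rw [hw, hc₂₀]
  refine ⟨by field_simp; ring, ?_, ?_⟩ <;> field_simp <;> ring
end

section
/- Let z₁ > 0 > z₂, 0 < a, let h : [0,a] → ℝ be continuous and strictly positive, and set H(x) := ∫₀ˣ ds/h(s). Let φ₀ˡ, φ₀^{a,l} ∈ ℝ and c₁₀ˡ, c₁₀^{a,l} > 0 with c₁₀ˡ ≠ c₁₀^{a,l}. Define for x ∈ [0,a]: c₁₀(x) := (1 − H(x)/H(a))·c₁₀ˡ + (H(x)/H(a))·c₁₀^{a,l}, φ₀(x) := φ₀ˡ + ((φ₀^{a,l} − φ₀ˡ)/(ln c₁₀^{a,l} − ln c₁₀ˡ))·ln(1 − H(x)/H(a) + (H(x)/H(a))·c₁₀^{a,l}/c₁₀ˡ), J₁₀ := ((c₁₀ˡ − c₁₀^{a,l})/H(a))·(1 + z₁(φ₀ˡ − φ₀^{a,l})/(ln c₁₀ˡ − ln c₁₀^{a,l})),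 J₂₀ := −(z₁(c₁₀ˡ − c₁₀^{a,l})/(z₂H(a)))·(1 + z₂(φ₀ˡ − φ₀^{a,l})/(ln c₁₀ˡ − ln c₁₀^{a,l})), I₀ := z₁J₁₀ + z₂J₂₀, T₀ := J₁₀ + J₂₀. Then c₁₀(x) > 0 on [0,a], φ₀(0) = φ₀ˡ, c₁₀(0) = c₁₀ˡ, φ₀(a) = φ₀^{a,l}, c₁₀(a) = c₁₀^{a,l}, and for all x ∈ (0,a): φ₀'(x) = −I₀/(z₁(z₁−z₂)h(x)c₁₀(x)) and c₁₀'(x) = z₂T₀/((z₁−z₂)h(x)). -/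
/-!
With `t = H/H(a)`, which increases from `0` to `1` with `t' = 1/(h H(a))`, the concentration `c₁₀` is
the affine interpolation `(1 - t) c₁₀ˡ + t c₁₀^{a,l}`, positive as a convex combination of positive
numbers, and `φ₀ = φ₀ˡ + k log (c₁₀/c₁₀ˡ)` with `k = (φ₀^{a,l} - φ₀ˡ)/(ln c₁₀^{a,l} - ln c₁₀ˡ)`.
Both derivatives are then explicit, and the fluxes were chosen so that
`z₂ T₀ = -(z₁ - z₂)(c₁₀ˡ - c₁₀^{a,l})/H(a)` and
`I₀ = z₁ (z₁ - z₂)(c₁₀ˡ - c₁₀^{a,l})(φ₀ˡ - φ₀^{a,l})/(H(a)(ln c₁₀ˡ - ln c₁₀^{a,l}))`.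
-/

open Set intervalIntegral

section Primitive

variable {g : ℝ → ℝ} {a b x : ℝ}

theorem primitive_mem_Icc (hg : ContinuousOn g (Icc a b)) (hg₀ : ∀ s ∈ Icc a b, 0 ≤ g s)
    (hx : x ∈ Icc a b) : ∫ s in a..x, g s ∈ Icc 0 (∫ s in a..b, g s) :=
  ⟨integral_nonneg hx.1 fun s hs => hg₀ s ⟨hs.1, hs.2.trans hx.2⟩,
    integral_mono_interval le_rfl hx.1 hx.2
      ((MeasureTheory.ae_restrict_iff' measurableSet_Ioc).2
        (Filter.Eventually.of_forall fun s hs => hg₀ s (Ioc_subset_Icc_self hs)))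
      (hg.intervalIntegrable_of_Icc (hx.1.trans hx.2))⟩

theorem integral_pos_of_continuousOn_pos (hg : ContinuousOn g (Icc a b))
    (hg₀ : ∀ s ∈ Icc a b, 0 < g s) (hab : a < b) : 0 < ∫ s in a..b, g s :=
  intervalIntegral_pos_of_pos_on (hg.intervalIntegrable_of_Icc hab.le)
    (fun s hs => hg₀ s (Ioo_subset_Icc_self hs)) hab

theorem primitive_div_mem_Icc (hg : ContinuousOn g (Icc a b)) (hg₀ : ∀ s ∈ Icc a b, 0 < g s)
    (hab : a < b) (hx : x ∈ Icc a b) :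
    (∫ s in a..x, g s) / (∫ s in a..b, g s) ∈ Icc 0 1 := by
  have hpos := integral_pos_of_continuousOn_pos hg hg₀ hab
  obtain ⟨hlow, hup⟩ := primitive_mem_Icc hg (fun s hs => (hg₀ s hs).le) hx
  exact ⟨div_nonneg hlow hpos.le, (div_le_one hpos).2 hup⟩

theorem hasDerivAt_primitive (hg : ContinuousOn g (Icc a b)) (hx : x ∈ Ioo a b) :
    HasDerivAt (fun y => ∫ s in a..y, g s) (g x) x :=
  integral_hasDerivAt_right
    ((hg.mono (Icc_subset_Icc_right hx.2.le)).intervalIntegrable_of_Icc hx.1.le)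
    ((hg.mono Ioo_subset_Icc_self).stronglyMeasurableAtFilter isOpen_Ioo x hx)
    (hg.continuousAt (Icc_mem_nhds hx.1 hx.2))

end Primitive

section Interpolation

variable {t : ℝ → ℝ} {t' x cl cr : ℝ}

theorem convex_combination_pos {s : ℝ} (hcl : 0 < cl) (hcr : 0 < cr) (hs : s ∈ Icc 0 1) :
    0 < (1 - s) * cl + s * cr := by
  simpa only [smul_eq_mul, mem_Ioi] using
    convex_Ioi (0 : ℝ) hcl hcr (sub_nonneg.2 hs.2) hs.1 (sub_add_cancel 1 s)

theorem log_sub_log_ne_zero (hcl : 0 < cl) (hcr : 0 < cr) (hne : cl ≠ cr) :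
    Real.log cr - Real.log cl ≠ 0 :=
  sub_ne_zero.2 fun hlog => hne (Real.log_injOn_pos hcl hcr hlog.symm)

theorem log_interpolation_at_one {φl φr : ℝ} (hcl : 0 < cl) (hcr : 0 < cr) (hne : cl ≠ cr) :
    φl + (φr - φl) / (Real.log cr - Real.log cl) * Real.log (1 - 1 + 1 * (cr / cl)) = φr := by
  rw [sub_self, zero_add, one_mul, Real.log_div hcr.ne' hcl.ne',
    div_mul_cancel₀ _ (log_sub_log_ne_zero hcl hcr hne), add_sub_cancel]

theorem hasDerivAt_affine_interpolation (ht : HasDerivAt t t' x) :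
    HasDerivAt (fun y => (1 - t y) * cl + t y * cr) ((cr - cl) * t') x := by
  refine (((ht.const_sub 1).mul_const cl).add (ht.mul_const cr)).congr_deriv ?_
  ring

theorem hasDerivAt_log_interpolation (hcl : 0 < cl) (ht : HasDerivAt t t' x)
    (hc : 0 < (1 - t x) * cl + t x * cr) :
    HasDerivAt (fun y => Real.log (1 - t y + t y * (cr / cl)))
      ((cr - cl) * t' / ((1 - t x) * cl + t x * cr)) x := by
  have hratio : 1 - t x + t x * (cr / cl) = ((1 - t x) * cl + t x * cr) / cl := by
    field_simp
  have hinner : HasDerivAt (fun y => 1 - t y + t y * (cr / cl)) ((cr - cl) * t' / cl) x := by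
    refine ((ht.const_sub 1).add (ht.mul_const (cr / cl))).congr_deriv ?_
    field_simp
    ring
  refine (hinner.log (by rw [hratio]; positivity)).congr_deriv ?_
  rw [hratio]
  field_simp

end Interpolation

section Fluxes

variable {z₁ z₂ cl cr Δφ L Ha J₁ J₂ : ℝ}

theorem total_flux_eq (hz₂ : z₂ ≠ 0) (hJ₁ : J₁ = ((cl - cr) / Ha) * (1 + z₁ * Δφ / L))
    (hJ₂ : J₂ = -(z₁ * (cl - cr) / (z₂ * Ha)) * (1 + z₂ * Δφ / L)) :
    z₂ * (J₁ + J₂) = (z₂ - z₁) * (cl - cr) / Ha := by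
  subst hJ₁ hJ₂
  field_simp
  ring

theorem current_eq (hz₂ : z₂ ≠ 0) (hJ₁ : J₁ = ((cl - cr) / Ha) * (1 + z₁ * Δφ / L))
    (hJ₂ : J₂ = -(z₁ * (cl - cr) / (z₂ * Ha)) * (1 + z₂ * Δφ / L)) :
    z₁ * J₁ + z₂ * J₂ = z₁ * (z₁ - z₂) * (cl - cr) * Δφ / (Ha * L) := by
  subst hJ₁ hJ₂
  field_simp
  ring

variable {t : ℝ → ℝ} {x area : ℝ}

theorem hasDerivAt_concentration (hz : z₁ - z₂ ≠ 0) (hz₂ : z₂ ≠ 0) (harea : area ≠ 0)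
    (ht : HasDerivAt t (1 / area / Ha) x)
    (hJ₁ : J₁ = ((cl - cr) / Ha) * (1 + z₁ * Δφ / L))
    (hJ₂ : J₂ = -(z₁ * (cl - cr) / (z₂ * Ha)) * (1 + z₂ * Δφ / L)) :
    HasDerivAt (fun y => (1 - t y) * cl + t y * cr) (z₂ * (J₁ + J₂) / ((z₁ - z₂) * area)) x := by
  refine (hasDerivAt_affine_interpolation ht).congr_deriv ?_
  rw [mul_div_assoc, ← mul_div_assoc z₂, total_flux_eq hz₂ hJ₁ hJ₂]
  field_simp
  ring

theorem hasDerivAt_potential {φl φr : ℝ} (hz₁ : z₁ ≠ 0) (hz : z₁ - z₂ ≠ 0) (hz₂ : z₂ ≠ 0)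
    (harea : area ≠ 0) (hcl : 0 < cl)
    (ht : HasDerivAt t (1 / area / Ha) x) (hc : 0 < (1 - t x) * cl + t x * cr)
    (hJ₁ : J₁ = ((cl - cr) / Ha) *
      (1 + z₁ * (φl - φr) / (Real.log cl - Real.log cr)))
    (hJ₂ : J₂ = -(z₁ * (cl - cr) / (z₂ * Ha)) *
      (1 + z₂ * (φl - φr) / (Real.log cl - Real.log cr))) :
    HasDerivAt
      (fun y => φl + (φr - φl) / (Real.log cr - Real.log cl) *
        Real.log (1 - t y + t y * (cr / cl)))
      (-(z₁ * J₁ + z₂ * J₂) / (z₁ * (z₁ - z₂) * area * ((1 - t x) * cl + t x * cr))) x := by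
  refine (((hasDerivAt_log_interpolation hcl ht hc).const_mul _).const_add φl).congr_deriv ?_
  rw [current_eq hz₂ hJ₁ hJ₂, ← neg_sub (Real.log cr)]
  field_simp
  ring

end Fluxes

open intervalIntegral in
/-- Lemma 2.2: the zeroth-order regular layer on `[0,a]` (no permanent charge)
solves the limiting slow system with the prescribed boundary values. -/
theorem zeroth_order_regular_layer_on_0a
    (z₁ z₂ a : ℝ) (hz₁ : 0 < z₁) (hz₂ : z₂ < 0) (ha : 0 < a)
    (h : ℝ → ℝ) (hcont : ContinuousOn h (Set.Icc 0 a))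
    (hpos : ∀ x ∈ Set.Icc 0 a, 0 < h x)
    (H : ℝ → ℝ) (hH : ∀ x, H x = ∫ s in (0 : ℝ)..x, 1 / h s)
    (φ₀l φ₀al c₁₀l c₁₀al : ℝ) (hc₁₀l : 0 < c₁₀l) (hc₁₀al : 0 < c₁₀al)
    (hne : c₁₀l ≠ c₁₀al)
    (c₁₀ φ₀ : ℝ → ℝ) (J₁₀ J₂₀ I₀ T₀ : ℝ)
    (hc₁₀ : ∀ x, c₁₀ x = (1 - H x / H a) * c₁₀l + (H x / H a) * c₁₀al)
    (hφ₀ : ∀ x, φ₀ x = φ₀l + ((φ₀al - φ₀l) / (Real.log c₁₀al - Real.log c₁₀l)) *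
      Real.log (1 - H x / H a + (H x / H a) * (c₁₀al / c₁₀l)))
    (hJ₁₀ : J₁₀ = ((c₁₀l - c₁₀al) / H a) *
      (1 + z₁ * (φ₀l - φ₀al) / (Real.log c₁₀l - Real.log c₁₀al)))
    (hJ₂₀ : J₂₀ = -(z₁ * (c₁₀l - c₁₀al) / (z₂ * H a)) *
      (1 + z₂ * (φ₀l - φ₀al) / (Real.log c₁₀l - Real.log c₁₀al)))
    (hI₀ : I₀ = z₁ * J₁₀ + z₂ * J₂₀) (hT₀ : T₀ = J₁₀ + J₂₀) :
    (∀ x ∈ Set.Icc 0 a, 0 < c₁₀ x) ∧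
    φ₀ 0 = φ₀l ∧ c₁₀ 0 = c₁₀l ∧ φ₀ a = φ₀al ∧ c₁₀ a = c₁₀al ∧
    (∀ x ∈ Set.Ioo 0 a,
      HasDerivAt φ₀ (-I₀ / (z₁ * (z₁ - z₂) * h x * c₁₀ x)) x ∧
      HasDerivAt c₁₀ (z₂ * T₀ / ((z₁ - z₂) * h x)) x) := by
  have hinv : ContinuousOn (fun s => 1 / h s) (Icc 0 a) :=
    continuousOn_const.div hcont fun x hx => (hpos x hx).ne'
  have hinv_pos : ∀ s ∈ Icc 0 a, 0 < 1 / h s := fun s hs => one_div_pos.2 (hpos s hs)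
  have ht := fun x (hx : x ∈ Icc 0 a) => primitive_div_mem_Icc hinv hinv_pos ha hx
  obtain rfl : H = fun x => ∫ s in (0 : ℝ)..x, 1 / h s := funext hH
  have hHa := (integral_pos_of_continuousOn_pos hinv hinv_pos ha).ne'
  have hc₁₀pos : ∀ x ∈ Icc 0 a, 0 < c₁₀ x := fun x hx =>
    hc₁₀ x ▸ convex_combination_pos hc₁₀l hc₁₀al (ht x hx)
  subst hI₀ hT₀
  refine ⟨hc₁₀pos, by simp [hφ₀], by simp [hc₁₀], ?_, ?_, fun x hx => ?_⟩
  · rw [hφ₀, div_self hHa]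
    exact log_interpolation_at_one hc₁₀l hc₁₀al hne
  · rw [hc₁₀, div_self hHa]
    ring
  · have hdt := (hasDerivAt_primitive hinv hx).div_const (∫ s in (0 : ℝ)..a, 1 / h s)
    have hcx := hc₁₀ x ▸ hc₁₀pos x (Ioo_subset_Icc_self hx)
    have harea := (hpos x (Ioo_subset_Icc_self hx)).ne'
    have hz : z₁ - z₂ ≠ 0 := by linarith
    rw [funext hc₁₀, funext hφ₀]
    exact ⟨hasDerivAt_potential hz₁.ne' hz hz₂.ne harea hc₁₀l hdt hcx hJ₁₀ hJ₂₀,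
      hasDerivAt_concentration hz hz₂.ne harea hdt hJ₁₀ hJ₂₀⟩
end

section
/- Let z₁ > 0 > z₂, λ ∈ ℝ, a > 0, let h : [0,a] → ℝ be continuous and strictly positive with H(x) := ∫₀ˣ ds/h(s), let cˡ, cᵃ > 0 with cˡ ≠ cᵃ, c₁₀(x) := (1 − H(x)/H(a))cˡ + (H(x)/H(a))cᵃ, and T₀ := (z₁ − z₂)(cᵃ − cˡ)/(z₂H(a)). Let c₁₁ˡ, c₁₁^{a,l} ∈ ℝ, define M₀ := c₁₁ˡ − c₁₁^{a,l} + ((λz₁ − z₂)/z₂)·((cᵃ)² − (cˡ)²), T₁ := −((z₁ − z₂)/(z₂H(a)))·M₀, and c₁₁(x) := c₁₁ˡ + ((λz₁ − z₂)/z₂)·(c₁₀(x)² − (cˡ)²) − (H(x)/H(a))·M₀. Then c₁₁(0) = c₁₁ˡ, c₁₁(a) = c₁₁^{a,l}, and for all x ∈ (0,a): c₁₁'(x) = (2(λz₁ − z₂)T₀c₁₀(x) + z₂T₁)/((z₁ − z₂)h(x)). -/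
/-!
In the normalised coordinate `θ = H / H(a)`, which runs from `0` to `1` with
`θ' = 1 / (H(a) h)`, the zeroth-order profile `c₁₀` is affine in `θ` and `c₁₁` is
a quadratic polynomial in `c₁₀` minus a multiple of `θ`. The endpoint values are
then read off at `θ = 0` and `θ = 1`, and the chain rule gives
`c₁₁' = (2 k (cᵃ - cˡ) c₁₀ - M₀) θ'` with `k = (λz₁ - z₂)/z₂`; substituting `T₀`
and `T₁` turns this into the slow equation.
-/

open Set

theorem ContinuousOn.hasDerivAt_integral_of_mem_Ioo {f : ℝ → ℝ} {a b x : ℝ}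
    (hf : ContinuousOn f (Icc a b)) (hx : x ∈ Ioo a b) :
    HasDerivAt (fun y => ∫ s in a..y, f s) (f x) x :=
  intervalIntegral.integral_hasDerivAt_right
    (hf.mono (uIcc_subset_Icc (left_mem_Icc.mpr (hx.1.trans hx.2).le)
      (Ioo_subset_Icc_self hx))).intervalIntegrable
    ((hf.mono Ioo_subset_Icc_self).stronglyMeasurableAtFilter isOpen_Ioo x hx)
    (hf.continuousAt (Icc_mem_nhds hx.1 hx.2))

theorem ContinuousOn.integral_pos_of_pos_on {f : ℝ → ℝ} {a b : ℝ} (hab : a < b)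
    (hf : ContinuousOn f (Icc a b)) (hpos : ∀ x ∈ Ioo a b, 0 < f x) :
    0 < ∫ s in a..b, f s :=
  intervalIntegral.intervalIntegral_pos_of_pos_on
    (hf.mono (uIcc_of_le hab.le).subset).intervalIntegrable hpos hab

section Interpolation

variable {θ : ℝ → ℝ} {θ' x : ℝ} (cl ca : ℝ)

theorem HasDerivAt.affine_interpolation (hθ : HasDerivAt θ θ' x) :
    HasDerivAt (fun y => (1 - θ y) * cl + θ y * ca) ((ca - cl) * θ') x := by
  refine (((hθ.const_sub 1).mul_const cl).fun_add (hθ.mul_const ca)).congr_deriv ?_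
  ring

theorem HasDerivAt.quadratic_correction_of_affine_interpolation (hθ : HasDerivAt θ θ' x)
    (c k M : ℝ) :
    HasDerivAt (fun y => c + k * (((1 - θ y) * cl + θ y * ca) ^ 2 - cl ^ 2) - θ y * M)
      ((2 * k * (ca - cl) * ((1 - θ x) * cl + θ x * ca) - M) * θ') x := by
  refine (((((hθ.affine_interpolation cl ca).fun_pow 2).sub_const (cl ^ 2)).const_mul k
    |>.const_add c).fun_sub (hθ.mul_const M)).congr_deriv ?_
  ring

end Interpolation

theorem first_order_regular_layer_concentration_on_0a_general
    (z₁ z₂ lam a : ℝ) (hz₁ : 0 < z₁) (hz₂ : z₂ < 0) (ha : 0 < a)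
    (h : ℝ → ℝ) (hcont : ContinuousOn h (Set.Icc 0 a))
    (hpos : ∀ x ∈ Set.Icc 0 a, 0 < h x)
    (H : ℝ → ℝ) (hH : ∀ x, H x = ∫ s in (0 : ℝ)..x, 1 / h s)
    (cl ca : ℝ)
    (c₁₀ : ℝ → ℝ)
    (hc₁₀ : ∀ x, c₁₀ x = (1 - H x / H a) * cl + (H x / H a) * ca)
    (T₀ : ℝ) (hT₀ : T₀ = (z₁ - z₂) * (ca - cl) / (z₂ * H a))
    (c₁₁l c₁₁al M₀ T₁ : ℝ) (c₁₁ : ℝ → ℝ)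
    (hM₀ : M₀ = c₁₁l - c₁₁al + ((lam * z₁ - z₂) / z₂) * (ca ^ 2 - cl ^ 2))
    (hT₁ : T₁ = -((z₁ - z₂) / (z₂ * H a)) * M₀)
    (hc₁₁ : ∀ x, c₁₁ x = c₁₁l + ((lam * z₁ - z₂) / z₂) * ((c₁₀ x) ^ 2 - cl ^ 2)
      - (H x / H a) * M₀) :
    c₁₁ 0 = c₁₁l ∧ c₁₁ a = c₁₁al ∧
    ∀ x ∈ Set.Ioo 0 a,
      HasDerivAt c₁₁
        ((2 * (lam * z₁ - z₂) * T₀ * c₁₀ x + z₂ * T₁) / ((z₁ - z₂) * h x)) x := by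
  have hinv : ContinuousOn (fun s => 1 / h s) (Icc 0 a) :=
    continuousOn_const.div hcont fun y hy => (hpos y hy).ne'
  have hHa : H a ≠ 0 := by
    rw [hH]
    exact (hinv.integral_pos_of_pos_on ha fun y hy =>
      one_div_pos.mpr (hpos y (Ioo_subset_Icc_self hy))).ne'
  have hc₁₁_eq : c₁₁ = fun y => c₁₁l + ((lam * z₁ - z₂) / z₂) *
      (((1 - H y / H a) * cl + (H y / H a) * ca) ^ 2 - cl ^ 2) - (H y / H a) * M₀ := by
    funext y; rw [hc₁₁, hc₁₀]
  refine ⟨by simp [hc₁₁_eq, hH], by simp [hc₁₁_eq, hHa, hM₀], fun x hx => ?_⟩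
  have hθ : HasDerivAt (fun y => H y / H a) (1 / h x / H a) x := by
    simp only [hH]
    exact (hinv.hasDerivAt_integral_of_mem_Ioo hx).div_const _
  have hhx : h x ≠ 0 := (hpos x (Ioo_subset_Icc_self hx)).ne'
  have hz₁₂ : z₁ - z₂ ≠ 0 := by linarith
  rw [hc₁₁_eq]
  refine (hθ.quadratic_correction_of_affine_interpolation cl ca c₁₁l
    ((lam * z₁ - z₂) / z₂) M₀).congr_deriv ?_
  rw [hc₁₀, hT₀, hT₁]
  field_simp [hz₂.ne]
  ring

/-- Concentration part of Lemma 2.3: the first-order regular layer `c₁₁` on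
`[0,a]` has the prescribed endpoint values and satisfies the first-order slow
equation. -/
theorem first_order_regular_layer_concentration_on_0a
    (z₁ z₂ lam a : ℝ) (hz₁ : 0 < z₁) (hz₂ : z₂ < 0) (ha : 0 < a)
    (h : ℝ → ℝ) (hcont : ContinuousOn h (Set.Icc 0 a))
    (hpos : ∀ x ∈ Set.Icc 0 a, 0 < h x)
    (H : ℝ → ℝ) (hH : ∀ x, H x = ∫ s in (0 : ℝ)..x, 1 / h s)
    (cl ca : ℝ) (hcl : 0 < cl) (hca : 0 < ca) (hne : cl ≠ ca)
    (c₁₀ : ℝ → ℝ)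
    (hc₁₀ : ∀ x, c₁₀ x = (1 - H x / H a) * cl + (H x / H a) * ca)
    (T₀ : ℝ) (hT₀ : T₀ = (z₁ - z₂) * (ca - cl) / (z₂ * H a))
    (c₁₁l c₁₁al M₀ T₁ : ℝ) (c₁₁ : ℝ → ℝ)
    (hM₀ : M₀ = c₁₁l - c₁₁al + ((lam * z₁ - z₂) / z₂) * (ca ^ 2 - cl ^ 2))
    (hT₁ : T₁ = -((z₁ - z₂) / (z₂ * H a)) * M₀)
    (hc₁₁ : ∀ x, c₁₁ x = c₁₁l + ((lam * z₁ - z₂) / z₂) * ((c₁₀ x) ^ 2 - cl ^ 2)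
      - (H x / H a) * M₀) :
    c₁₁ 0 = c₁₁l ∧ c₁₁ a = c₁₁al ∧
    ∀ x ∈ Set.Ioo 0 a,
      HasDerivAt c₁₁
        ((2 * (lam * z₁ - z₂) * T₀ * c₁₀ x + z₂ * T₁) / ((z₁ - z₂) * h x)) x :=
  first_order_regular_layer_concentration_on_0a_general z₁ z₂ lam a hz₁ hz₂ ha h hcont hpos H hH cl
    ca c₁₀ hc₁₀ T₀ hT₀ c₁₁l c₁₁al M₀ T₁ c₁₁ hM₀ hT₁ hc₁₁
end

section
/- Let z₁, z₂, Q, J₁₀, J₂₀, c₁₀^{a,m} ∈ ℝ with z₁ ≠ 0, z₂ ≠ 0, z₁ ≠ z₂, I₀ := z₁J₁₀ + z₂J₂₀, T₀ := J₁₀ + J₂₀ ≠ 0. Let c₁₀(y) := e^{z₁z₂T₀y}·c₁₀^{a,m} + (J₁₀Q/(z₁T₀))·(e^{z₁z₂T₀y} − 1) and σ(y) := (z₁ − z₂)z₁c₁₀(y) − z₂Q, and suppose σ(s) > 0 for all s ∈ [0, y]. Then ∫₀^y z₁I₀c₁₀(s)/σ(s) ds = J₁₀·y + (ln σ(y) −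 ln σ(0))/(z₁(z₁ − z₂)). -/
/-!
Both `c₁₀` and `σ` solve linear ODEs: `c₁₀' = z₁z₂T₀c₁₀ + z₂QJ₁₀` and `σ' = (z₁ - z₂)z₁c₁₀'`.
Expanding `I₀` and `T₀` gives `z₁I₀c₁₀ = J₁₀σ + c₁₀'`, so the integrand is
`J₁₀ + σ'/(z₁(z₁ - z₂)σ)`, a constant plus a logarithmic derivative.
-/

open Real Set intervalIntegral

theorem hasDerivAt_exp_mul_affine (k c₀ p s : ℝ) :
    HasDerivAt (fun t => exp (k * t) * c₀ + p * (exp (k * t) - 1))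
      (k * (exp (k * s) * c₀ + p * (exp (k * s) - 1)) + k * p) s := by
  have hexp : HasDerivAt (fun t => exp (k * t)) (exp (k * s) * k) s := by
    simpa using ((hasDerivAt_id s).const_mul k).exp
  exact ((hexp.mul_const c₀).add ((hexp.sub_const 1).const_mul p)).congr_deriv (by ring)

section LogDeriv

variable {f f' : ℝ → ℝ} {a b : ℝ}

theorem continuousOn_deriv_div (hf : ∀ x ∈ uIcc a b, HasDerivAt f (f' x) x)
    (hf' : ContinuousOn f' (uIcc a b)) (hne : ∀ x ∈ uIcc a b, f x ≠ 0) :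
    ContinuousOn (fun x => f' x / f x) (uIcc a b) :=
  hf'.div (fun x hx => (hf x hx).continuousAt.continuousWithinAt) hne

theorem integral_deriv_div_eq_log_sub (hf : ∀ x ∈ uIcc a b, HasDerivAt f (f' x) x)
    (hf' : ContinuousOn f' (uIcc a b)) (hne : ∀ x ∈ uIcc a b, f x ≠ 0) :
    ∫ x in a..b, f' x / f x = log (f b) - log (f a) :=
  integral_eq_sub_of_hasDerivAt (fun x hx => (hf x hx).log (hne x hx))
    (continuousOn_deriv_div hf hf' hne).intervalIntegrable

end LogDeriv

theorem integral_identity_Sz_middle_general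
    (z₁ z₂ Q J₁₀ J₂₀ c₁₀am y : ℝ)
    (hz₁ : z₁ ≠ 0) (hz₁₂ : z₁ ≠ z₂)
    (I₀ T₀ : ℝ) (hI₀ : I₀ = z₁ * J₁₀ + z₂ * J₂₀) (hT₀ : T₀ = J₁₀ + J₂₀)
    (hT₀ne : T₀ ≠ 0)
    (c₁₀ σ : ℝ → ℝ)
    (hc₁₀ : ∀ s, c₁₀ s = Real.exp (z₁ * z₂ * T₀ * s) * c₁₀am +
      (J₁₀ * Q / (z₁ * T₀)) * (Real.exp (z₁ * z₂ * T₀ * s) - 1))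
    (hσ : ∀ s, σ s = (z₁ - z₂) * z₁ * c₁₀ s - z₂ * Q)
    (hy : 0 ≤ y) (hσpos : ∀ s ∈ Set.Icc 0 y, 0 < σ s) :
    (∫ s in (0 : ℝ)..y, z₁ * I₀ * c₁₀ s / σ s) =
      J₁₀ * y + (Real.log (σ y) - Real.log (σ 0)) / (z₁ * (z₁ - z₂)) := by
  have hz : z₁ * (z₁ - z₂) ≠ 0 := mul_ne_zero hz₁ (sub_ne_zero.mpr hz₁₂)
  set dc : ℝ → ℝ := fun s => z₁ * z₂ * T₀ * c₁₀ s + z₂ * Q * J₁₀ with hdc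
  have hc₁₀' : ∀ s, HasDerivAt c₁₀ (dc s) s := fun s => by
    convert hasDerivAt_exp_mul_affine (z₁ * z₂ * T₀) c₁₀am (J₁₀ * Q / (z₁ * T₀)) s using 1
    · exact funext hc₁₀
    · simp only [hdc, hc₁₀ s]; field_simp
  have hσ' : ∀ s, HasDerivAt σ ((z₁ - z₂) * z₁ * dc s) s := fun s => by
    rw [show σ = _ from funext hσ]
    exact ((hc₁₀' s).const_mul _).sub_const _
  have hc₁₀c : Continuous c₁₀ := continuous_iff_continuousAt.2 fun s => (hc₁₀' s).continuousAt
  have hσ'c : ContinuousOn (fun s => (z₁ - z₂) * z₁ * dc s) (uIcc 0 y) := by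
    simp only [hdc]; fun_prop
  have hσne : ∀ s ∈ uIcc 0 y, σ s ≠ 0 := fun s hs =>
    (hσpos s (uIcc_of_le hy ▸ hs)).ne'
  have hsplit : EqOn (fun s => z₁ * I₀ * c₁₀ s / σ s)
      (fun s => J₁₀ + (z₁ * (z₁ - z₂))⁻¹ * ((z₁ - z₂) * z₁ * dc s / σ s)) (uIcc 0 y) :=
    fun s hs => by
      have := hσne s hs
      simp only [hdc, hI₀, hT₀]
      field_simp
      rw [hσ s]
      ring
  rw [integral_congr hsplit, integral_add intervalIntegrable_const
      ((continuousOn_deriv_div (fun s _ => hσ' s) hσ'c hσne).intervalIntegrable.const_mul _),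
    integral_const_mul, integral_deriv_div_eq_log_sub (fun s _ => hσ' s) hσ'c hσne]
  simp only [integral_const, sub_zero, smul_eq_mul]
  field_simp

/-- Identity (3.41) for `S_z = ∫₀^y z₁I₀c₁₀(s)/σ(s) ds` on the middle
subinterval with nonzero constant permanent charge `Q`. -/
theorem integral_identity_Sz_middle
    (z₁ z₂ Q J₁₀ J₂₀ c₁₀am y : ℝ)
    (hz₁ : z₁ ≠ 0) (hz₂ : z₂ ≠ 0) (hz₁₂ : z₁ ≠ z₂)
    (I₀ T₀ : ℝ) (hI₀ : I₀ = z₁ * J₁₀ + z₂ * J₂₀) (hT₀ : T₀ = J₁₀ + J₂₀)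
    (hT₀ne : T₀ ≠ 0)
    (c₁₀ σ : ℝ → ℝ)
    (hc₁₀ : ∀ s, c₁₀ s = Real.exp (z₁ * z₂ * T₀ * s) * c₁₀am +
      (J₁₀ * Q / (z₁ * T₀)) * (Real.exp (z₁ * z₂ * T₀ * s) - 1))
    (hσ : ∀ s, σ s = (z₁ - z₂) * z₁ * c₁₀ s - z₂ * Q)
    (hy : 0 ≤ y) (hσpos : ∀ s ∈ Set.Icc 0 y, 0 < σ s) :
    (∫ s in (0 : ℝ)..y, z₁ * I₀ * c₁₀ s / σ s) =
      J₁₀ * y + (Real.log (σ y) - Real.log (σ 0)) / (z₁ * (z₁ - z₂)) :=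
  integral_identity_Sz_middle_general z₁ z₂ Q J₁₀ J₂₀ c₁₀am y hz₁ hz₁₂ I₀ T₀ hI₀ hT₀ hT₀ne c₁₀ σ
    hc₁₀ hσ hy hσpos
end

section
/- Let z₁, z₂, c₁, c₂, Q ∈ ℝ and consider the 4×4 real matrix M (the Jacobian of the limiting fast system (φ' , u', c₁', c₂') = (u, −z₁c₁ − z₂c₂ − Q, −z₁c₁u, −z₂c₂u) at an equilibrium (φ*, 0, c₁, c₂)), namely M with rows (0, 1, 0, 0), (0, 0, −z₁, −z₂), (0, −z₁c₁, 0, 0), (0, −z₂c₂, 0, 0). Then the characteristic polynomial of M is X²·(X² − (z₁²c₁ + z₂²c₂)); consequently, if c₁ > 0 and c₂ > 0 and (z₁, z₂) ≠ (0,0), then M has exactly two nonzero real eigenvalues, √(z₁²c₁ + z₂²c₂) and −√(z₁²c₁ + z₂²c₂), of opposite signs. -/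
open Polynomial

lemma hasEigenvalue_toLin'_iff_eval_charpoly {n : ℕ} (A : Matrix (Fin n) (Fin n) ℝ) (μ : ℝ) :
    Module.End.HasEigenvalue (Matrix.toLin' A) μ ↔ A.charpoly.eval μ = 0 := by
  have hdet : A.charpoly.eval μ = (Matrix.diagonal (fun _ => μ) - A).det := by
    rw [Matrix.charpoly, ← Polynomial.coe_evalRingHom, RingHom.map_det]
    congr 1
    ext i j
    by_cases h : i = j
    · subst h
      simp [Matrix.charmatrix_apply_eq, Matrix.diagonal_apply_eq]
    · simp [Matrix.charmatrix_apply_ne _ _ _ h, Matrix.diagonal_apply_ne _ h]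
  rw [hdet]
  constructor
  · intro h
    obtain ⟨v, hv⟩ := h.exists_hasEigenvector
    rw [← Matrix.exists_mulVec_eq_zero_iff]
    refine ⟨v, hv.2, ?_⟩
    have := hv.1
    rw [Module.End.mem_eigenspace_iff] at this
    simp only [Matrix.toLin'_apply] at this
    rw [Matrix.sub_mulVec, this]
    ext i
    simp [Matrix.mulVec_diagonal]
  · intro h
    rw [← Matrix.exists_mulVec_eq_zero_iff] at h
    obtain ⟨v, hv0, hv⟩ := h
    apply Module.End.hasEigenvalue_of_hasEigenvector (x := v)
    refine ⟨Module.End.mem_eigenspace_iff.mpr ?_, hv0⟩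
    rw [Matrix.sub_mulVec] at hv
    have := sub_eq_zero.mp hv
    simp only [Matrix.toLin'_apply]
    rw [← this]
    ext i
    simp [Matrix.mulVec_diagonal]

/-- Lemma 1.1 (normal hyperbolicity), linear-algebra content: the Jacobian of
the limiting fast system at an equilibrium has characteristic polynomial
`X²(X² − (z₁²c₁ + z₂²c₂))`, hence (for positive concentrations) exactly two
nonzero real eigenvalues `±√(z₁²c₁ + z₂²c₂)` of opposite signs. -/
theorem jacobian_charpoly_and_eigenvalues
    (z₁ z₂ c₁ c₂ Q : ℝ)
    (M : Matrix (Fin 4) (Fin 4) ℝ)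
    (hM : M = !![0, 1, 0, 0;
                 0, 0, -z₁, -z₂;
                 0, -z₁ * c₁, 0, 0;
                 0, -z₂ * c₂, 0, 0]) :
    M.charpoly = X ^ 2 * (X ^ 2 - C (z₁ ^ 2 * c₁ + z₂ ^ 2 * c₂)) ∧
    (0 < c₁ → 0 < c₂ → (z₁, z₂) ≠ (0, 0) →
      {μ : ℝ | μ ≠ 0 ∧ Module.End.HasEigenvalue (Matrix.toLin' M) μ} =
        {Real.sqrt (z₁ ^ 2 * c₁ + z₂ ^ 2 * c₂),
         -Real.sqrt (z₁ ^ 2 * c₁ + z₂ ^ 2 * c₂)} ∧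
      0 < Real.sqrt (z₁ ^ 2 * c₁ + z₂ ^ 2 * c₂) ∧
      -Real.sqrt (z₁ ^ 2 * c₁ + z₂ ^ 2 * c₂) < 0) := by
  have hcp : M.charpoly = X ^ 2 * (X ^ 2 - C (z₁ ^ 2 * c₁ + z₂ ^ 2 * c₂)) := by
    subst hM
    rw [Matrix.charpoly]
    simp [Matrix.det_succ_row_zero, Fin.sum_univ_succ, Matrix.charmatrix_apply,
      Matrix.one_apply, Matrix.diagonal]
    norm_num [Fin.ext_iff, Fin.succ, Fin.succAbove, Fin.castSucc]
    ring
  refine ⟨hcp, fun hc₁ hc₂ hz => ?_⟩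
  set s : ℝ := z₁ ^ 2 * c₁ + z₂ ^ 2 * c₂ with hs
  have hspos : 0 < s := by
    have hz' : z₁ ≠ 0 ∨ z₂ ≠ 0 := by
      by_contra h
      push_neg at h
      exact hz (by simp [Prod.ext_iff, h.1, h.2])
    rcases hz' with h | h
    · have h1 : 0 < z₁ ^ 2 := pow_pos (abs_pos.mpr h) 2 |>.trans_le (by rw [sq_abs])
      nlinarith [mul_nonneg (sq_nonneg z₂) hc₂.le]
    · have h2 : 0 < z₂ ^ 2 := pow_pos (abs_pos.mpr h) 2 |>.trans_le (by rw [sq_abs])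
      nlinarith [mul_nonneg (sq_nonneg z₁) hc₁.le]
  have hsqrt : 0 < Real.sqrt s := Real.sqrt_pos.mpr hspos
  refine ⟨?_, hsqrt, neg_neg_iff_pos.mpr hsqrt⟩
  ext μ
  simp only [Set.mem_setOf_eq, Set.mem_insert_iff, Set.mem_singleton_iff,
    hasEigenvalue_toLin'_iff_eval_charpoly, hcp]
  have hsq : Real.sqrt s ^ 2 = s := Real.sq_sqrt hspos.le
  constructor
  · rintro ⟨hμ, hev⟩
    simp only [eval_mul, eval_pow, eval_sub, eval_X, eval_C] at hev
    have h2 : μ ^ 2 = s := by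
      rcases mul_eq_zero.mp hev with h | h
      · exact absurd (pow_eq_zero_iff (by norm_num) |>.mp h) hμ
      · linarith [sub_eq_zero.mp h]
    have := sq_eq_sq_iff_eq_or_eq_neg.mp (h2.trans hsq.symm)
    exact this
  · rintro (rfl | rfl)
    · refine ⟨hsqrt.ne', ?_⟩
      simp [hsq]
    · refine ⟨(neg_neg_iff_pos.mpr hsqrt).ne, ?_⟩
      simp [hsq]
end
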